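/- arXiv:1312.2081 — 6 statements merged into one kernel-verified Lean document; each statement's English description precedes it below -/
import Mathlib

section
/- For integers n ≥ 2 and m ≥ 2n+1, define α = (m-1)/(n-1), β = ⌈α⌉, γ = β²/(β+1), and t(n,m) = (n-1)·β + 1 if α ≤ γ, and t(n,m) = ⌊(m-1)/β⌋ + m if α > γ. Then t(n,m) equals the least integer t such that t cannot be written as a sum of (one or more) integers each lying in the interval [t-m+1, n-1]. -/
/-!
A sum of `k ≥ 1` integers from `[a, b]` can take exactly the values in `[k a, k b]`, so `t` is a
sum of parts from `[t - M, d]` iff `(k - 1) t ≤ k M` and `t ≤ k d` for some `k ≥ 1`. Both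
conditions are preserved when `t` decreases, so the representable integers form a down-set and
its least non-member is one more than its largest member, `max_k min (k d, ⌊k M / (k - 1)⌋)`.
The first term of the minimum wins for `k ≤ β` and the second for `k > β`, where `β = ⌈M / d⌉`;
so the largest member is `max (β d, M + ⌊M / β⌋)`, attained at `k = β` or `k = β + 1`, and the
comparison `α ≤ β² / (β + 1)` decides which of the two it is.
-/

theorem exists_list_length_eq_sum_eq {a b s : ℤ} {k : ℕ} (ha : k * a ≤ s) (hb : s ≤ k * b) :
    ∃ l : List ℤ, l.length = k ∧ (∀ x ∈ l, a ≤ x ∧ x ≤ b) ∧ l.sum = s := by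
  induction k generalizing s with
  | zero => exact ⟨[], rfl, by simp, by simp at ha hb ⊢; omega⟩
  | succ k ih =>
    push_cast at ha hb
    have hab : a ≤ b := by nlinarith
    -- the first summand is as small as the remaining `k` summands allow
    set x := max a (s - k * b) with hx
    have hxb : x ≤ b := max_le hab (by linarith)
    have hka : k * a ≤ s - x := by
      rcases max_choice a (s - k * b) with h | h <;> rw [hx, h]
      · linarith
      · nlinarith
    obtain ⟨l, hlen, hmem, hsum⟩ := ih hka (by linarith [le_max_right a (s - k * b)])
    refine ⟨x :: l, by simp [hlen], ?_, by simp [hsum]⟩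
    simp only [List.mem_cons, forall_eq_or_imp]
    exact ⟨⟨le_max_left _ _, hxb⟩, hmem⟩

theorem exists_list_sum_eq_iff {a b s : ℤ} :
    (∃ l : List ℤ, l ≠ [] ∧ (∀ x ∈ l, a ≤ x ∧ x ≤ b) ∧ l.sum = s) ↔
      ∃ k : ℕ, 0 < k ∧ k * a ≤ s ∧ s ≤ k * b := by
  constructor
  · rintro ⟨l, hne, hmem, rfl⟩
    refine ⟨l.length, List.length_pos_iff.2 hne, ?_, ?_⟩
    · simpa using l.card_nsmul_le_sum a fun x hx => (hmem x hx).1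
    · simpa using l.sum_le_card_nsmul b fun x hx => (hmem x hx).2
  · rintro ⟨k, hk, ha, hb⟩
    obtain ⟨l, rfl, hmem, hsum⟩ := exists_list_length_eq_sum_eq ha hb
    exact ⟨l, List.ne_nil_of_length_pos hk, hmem, hsum⟩

theorem IsLowerSet.isLeast_compl_succ {α : Type*} [LinearOrder α] [SuccOrder α] {S : Set α}
    (hS : IsLowerSet S) {x : α} (hx : x ∈ S) (hsucc : Order.succ x ∉ S) :
    IsLeast Sᶜ (Order.succ x) :=
  ⟨hsucc, fun _ ht => Order.succ_le_of_lt (lt_of_not_ge fun h => ht (hS h hx))⟩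

/-- The integers `t` that are a sum of `k ≥ 1` integers from `[t - M, d]`
(see `exists_list_sum_eq_iff`). -/
def representable (M d : ℤ) : Set ℤ :=
  {t | ∃ k : ℕ, 0 < k ∧ k * (t - M) ≤ t ∧ t ≤ k * d}

section representable

variable {M d β : ℤ}

theorem isLowerSet_representable (M d : ℤ) : IsLowerSet (representable M d) := by
  rintro t s hst ⟨k, hk, hlo, hhi⟩
  have hk1 : (1 : ℤ) ≤ k := by exact_mod_cast hk
  exact ⟨k, hk, by nlinarith, hhi.trans' hst⟩

theorem max_mem_representable (hβ : 0 < β) (hlo : (β - 1) * d ≤ M) (hhi : M ≤ β * d) :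
    max (β * d) (M + M / β) ∈ representable M d := by
  lift β to ℕ using hβ.le
  have hq : M / β * β ≤ M := Int.ediv_mul_le M (by omega)
  rcases le_total (M + M / β) (β * d) with h | h
  · rw [max_eq_left h]
    exact ⟨β, by omega, by nlinarith, le_rfl⟩
  · rw [max_eq_right h]
    have hqd : M / β ≤ d := le_of_mul_le_mul_right (by linarith) (by omega : (0 : ℤ) < β)
    exact ⟨β + 1, by omega, by push_cast; nlinarith, by push_cast; nlinarith⟩

theorem max_add_one_not_mem_representable (hβ : 0 < β) (hlo : (β - 1) * d ≤ M)
    (hhi : M ≤ β * d) : max (β * d) (M + M / β) + 1 ∉ representable M d := by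
  rintro ⟨k, hk, hkM, hkd⟩
  set T := max (β * d) (M + M / β) + 1
  have hd : 0 ≤ d := by nlinarith
  have hβT : β * d < T := by omega
  have hMT : M + M / β < T := by omega
  rcases le_or_gt (k : ℤ) β with hkβ | hkβ
  · nlinarith
  · -- `β (⌊M / β⌋ + 1) ≤ (k - 1) (T - M) ≤ M < (⌊M / β⌋ + 1) β`
    have hq := Int.lt_ediv_add_one_mul_self M hβ
    nlinarith

theorem isLeast_not_exists_list_sum_eq (hβ : 0 < β) (hlo : (β - 1) * d ≤ M)
    (hhi : M ≤ β * d) :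
    IsLeast {t | ¬ ∃ l : List ℤ, l ≠ [] ∧ (∀ x ∈ l, t - M ≤ x ∧ x ≤ d) ∧ l.sum = t}
      (max (β * d) (M + M / β) + 1) := by
  simp_rw [exists_list_sum_eq_iff, ← Order.succ_eq_add_one]
  exact (isLowerSet_representable M d).isLeast_compl_succ (max_mem_representable hβ hlo hhi)
    (by simpa [Order.succ_eq_add_one] using max_add_one_not_mem_representable hβ hlo hhi)

end representable

theorem add_ediv_le_mul_of_mul_add_one_le {M d β : ℤ} (hβ : 0 < β)
    (h : M * (β + 1) ≤ β ^ 2 * d) :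
    M + M / β ≤ β * d := by
  have hq : M / β * β ≤ M := Int.ediv_mul_le M hβ.ne'
  nlinarith

theorem mul_le_add_ediv_of_lt {M d β : ℤ} (hβ : 0 < β) (h : β ^ 2 * d < M * (β + 1)) :
    β * d ≤ M + M / β := by
  have : β * d - M ≤ M / β := (Int.le_ediv_iff_mul_le hβ).2 (by nlinarith)
  omega

theorem sub_one_mul_le_and_le_ceil_mul {M d : ℤ} (hd : 0 < d) :
    (⌈(M : ℚ) / d⌉ - 1) * d ≤ M ∧ M ≤ ⌈(M : ℚ) / d⌉ * d := by
  have hdQ : (0 : ℚ) < d := by exact_mod_cast hd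
  have hlt : ((⌈(M : ℚ) / d⌉ - 1 : ℤ) : ℚ) < M / d := Int.lt_ceil.1 (by omega)
  have hle : (M : ℚ) / d ≤ ⌈(M : ℚ) / d⌉ := Int.le_ceil _
  rw [lt_div_iff₀ hdQ] at hlt
  rw [div_le_iff₀ hdQ] at hle
  exact ⟨by exact_mod_cast hlt.le, by exact_mod_cast hle⟩

/-- t(n,m) is the least integer t that cannot be written as a sum of
one or more integers each lying in the interval [t-m+1, n-1]. -/
theorem stmt0 (n m : ℤ) (hn : 2 ≤ n) (hm : 2 * n + 1 ≤ m) :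
    IsLeast {t : ℤ | ¬ ∃ l : List ℤ,
        l ≠ [] ∧ (∀ x ∈ l, t - m + 1 ≤ x ∧ x ≤ n - 1) ∧ l.sum = t}
      (let α : ℚ := ((m : ℚ) - 1) / ((n : ℚ) - 1)
       let β : ℤ := ⌈α⌉
       if α ≤ (β : ℚ) ^ 2 / ((β : ℚ) + 1) then (n - 1) * β + 1 else (m - 1) / β + m) := by
  have hsub : ∀ t, t - m + 1 = t - (m - 1) := fun t => by ring
  obtain ⟨hlo, hhi⟩ := sub_one_mul_le_and_le_ceil_mul (M := m - 1) (d := n - 1) (by omega)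
  push_cast at hlo hhi
  set β := ⌈((m : ℚ) - 1) / ((n : ℚ) - 1)⌉
  have hβ : 0 < β := by nlinarith
  have hcond : ((m : ℚ) - 1) / ((n : ℚ) - 1) ≤ (β : ℚ) ^ 2 / ((β : ℚ) + 1) ↔
      (m - 1) * (β + 1) ≤ β ^ 2 * (n - 1) := by
    rw [div_le_div_iff₀ (by norm_cast; omega) (by norm_cast; omega)]
    norm_cast
  have key := isLeast_not_exists_list_sum_eq hβ hlo hhi
  simp only [hsub]
  split_ifs with h <;> rw [hcond] at h
  · rwa [max_eq_left (add_ediv_le_mul_of_mul_add_one_le hβ h), mul_comm] at key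
  · rw [max_eq_right (mul_le_add_ediv_of_lt hβ (not_le.1 h))] at key
    convert key using 1
    ring
end

section
/- Let n ≥ 2, m ≥ 2n+1, α = (m-1)/(n-1), β = ⌈α⌉. Then the set T of integers t such that t ∈ L([t-m+1, n-1]) has maximum element max{(n-1)·β, ⌊(m-1)/β⌋ + m - 1}. -/
/-!
A multiset of `k` integers from `[a, b]` can have any sum in `[k a, k b]`, so
`t ∈ L([t - m + 1, n - 1])` just says that `k (t - m + 1) ≤ t ≤ k (n - 1)` for some `k`.
With `k ≤ β` summands this forces `t ≤ β (n - 1)`; with `k > β` summands and `t ≥ m` it forces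
`β (t - m + 1) ≤ m - 1`, i.e. `t ≤ ⌊(m - 1) / β⌋ + m - 1`. Conversely both values are attained,
with `β` summands equal to `n - 1`, resp. `β + 1` summands equal to `⌊(m - 1) / β⌋` or one more,
because `β` is the least integer with `m - 1 ≤ β (n - 1)`.
-/

/-- `IsSumOfIcc a b t` is `t ∈ L([a, b])`. -/
def IsSumOfIcc (a b t : ℤ) : Prop :=
  ∃ l : List ℤ, (∀ x ∈ l, a ≤ x ∧ x ≤ b) ∧ l.sum = t

theorem isSumOfIcc_iff {a b t : ℤ} : IsSumOfIcc a b t ↔ ∃ k : ℕ, k * a ≤ t ∧ t ≤ k * b := by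
  constructor
  · rintro ⟨l, hl, rfl⟩
    refine ⟨l.length, ?_, ?_⟩
    · simpa using List.card_nsmul_le_sum l a fun x hx => (hl x hx).1
    · simpa using List.sum_le_card_nsmul l b fun x hx => (hl x hx).2
  · rintro ⟨k, hka, hkb⟩
    induction k generalizing t with
    | zero => exact ⟨[], by simp, by simp at hka hkb ⊢; omega⟩
    | succ k ih =>
      have hab : a ≤ b := by
        push_cast at hka hkb
        nlinarith
      -- Peel off one summand `x`, as small as possible so that the rest stays below `k b`.
      set x := max a (t - k * b)
      obtain ⟨l, hl, hsum⟩ := ih (t := t - x)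
        (by
          have : x ≤ t - k * a := by
            push_cast at hka
            exact max_le (by linarith) (by nlinarith)
          linarith)
        (by have := le_max_right a (t - k * b); linarith)
      refine ⟨x :: l, ?_, by simp [hsum]⟩
      simp only [List.mem_cons, forall_eq_or_imp]
      refine ⟨⟨le_max_left _ _, max_le hab ?_⟩, hl⟩
      push_cast at hkb
      linarith

theorem le_max_of_isSumOfIcc {n m β t : ℤ} (hn : 1 ≤ n) (hm : 1 ≤ m) (hβ : 0 < β)
    (ht : IsSumOfIcc (t - m + 1) (n - 1) t) :
    t ≤ max ((n - 1) * β) ((m - 1) / β + m - 1) := by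
  obtain ⟨k, hk_lower, hk_upper⟩ := isSumOfIcc_iff.1 ht
  have hq : 0 ≤ (m - 1) / β := Int.ediv_nonneg (by omega) hβ.le
  rcases le_or_gt (k : ℤ) β with hkβ | hkβ
  · exact le_max_of_le_left (by nlinarith)
  refine le_max_of_le_right ?_
  rcases le_or_gt t (m - 1) with htm | htm
  · omega
  have hβ_mul : β * (t - m + 1) ≤ m - 1 := by nlinarith
  have : t - m + 1 ≤ (m - 1) / β := (Int.le_ediv_iff_mul_le hβ).2 (by linarith)
  omega

theorem isSumOfIcc_mul {n m β : ℤ} (hβ : 0 ≤ β) (h : (β - 1) * (n - 1) ≤ m - 1) :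
    IsSumOfIcc ((n - 1) * β - m + 1) (n - 1) ((n - 1) * β) :=
  isSumOfIcc_iff.2 ⟨β.toNat, by rw [Int.toNat_of_nonneg hβ]; nlinarith,
    by rw [Int.toNat_of_nonneg hβ, mul_comm]⟩

theorem isSumOfIcc_ediv_add {n m β : ℤ} (hβ : 0 < β) (h : m - 1 ≤ β * (n - 1)) :
    IsSumOfIcc ((m - 1) / β) (n - 1) ((m - 1) / β + m - 1) := by
  have hq_le : (m - 1) / β ≤ n - 1 := Int.ediv_le_of_le_mul hβ (by linarith)
  refine isSumOfIcc_iff.2 ⟨β.toNat + 1, ?_, ?_⟩ <;> push_cast [Int.toNat_of_nonneg hβ.le]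
  · nlinarith [Int.ediv_mul_le (m - 1) hβ.ne']
  · nlinarith

theorem ceil_div_bounds {a b : ℤ} (hb : 0 < b) :
    (⌈(a : ℚ) / b⌉ - 1) * b < a ∧ a ≤ ⌈(a : ℚ) / b⌉ * b := by
  have hb' : (0 : ℚ) < b := by exact_mod_cast hb
  constructor
  · have := Int.ceil_lt_add_one ((a : ℚ) / b)
    rw [← sub_lt_iff_lt_add, lt_div_iff₀ hb'] at this
    exact_mod_cast this
  · have := Int.le_ceil ((a : ℚ) / b)
    rw [div_le_iff₀ hb'] at this
    exact_mod_cast this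

/-- the set T = {t : t ∈ L([t-m+1, n-1])} has maximum element
max{(n-1)·β, ⌊(m-1)/β⌋ + m - 1}, where β = ⌈(m-1)/(n-1)⌉. -/
theorem stmt1 (n m : ℤ) (hn : 2 ≤ n) (hm : 2 * n + 1 ≤ m) :
    IsGreatest {t : ℤ | ∃ l : List ℤ,
        (∀ x ∈ l, t - m + 1 ≤ x ∧ x ≤ n - 1) ∧ l.sum = t}
      (max ((n - 1) * ⌈((m : ℚ) - 1) / ((n : ℚ) - 1)⌉)
        ((m - 1) / ⌈((m : ℚ) - 1) / ((n : ℚ) - 1)⌉ + m - 1)) := by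
  have hβ_bounds := ceil_div_bounds (a := m - 1) (b := n - 1) (by omega)
  push_cast at hβ_bounds
  set β := ⌈((m : ℚ) - 1) / ((n : ℚ) - 1)⌉
  obtain ⟨hβ_lower, hβ_upper⟩ := hβ_bounds
  have hβ : 0 < β := by nlinarith
  refine ⟨?_, fun t ht => le_max_of_isSumOfIcc (by omega) (by omega) hβ ht⟩
  rcases max_choice ((n - 1) * β) ((m - 1) / β + m - 1) with h | h <;> rw [h]
  · exact isSumOfIcc_mul hβ.le hβ_lower.le
  · show IsSumOfIcc _ (n - 1) _
    convert isSumOfIcc_ediv_add hβ hβ_upper using 1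
    ring
end

section
/- Let G be a finite simple graph on at least three vertices with δ(G) ≥ ⌊n/2⌋ and G connected. Then G contains a path with at least min{|V(G)|, n} vertices. -/
/-!
Take a longest path `p = v₀ … v_k`. If it had fewer than `min |V| n` vertices, then every
neighbour of `v₀` and of `v_k` lies on `p`, and `deg v₀ + deg v_k ≥ 2 ⌊n/2⌋ > k`; by
pigeonhole some `i < k` has `v₀ ~ v_{i+1}` and `v_k ~ v_i`, so
`v₀ … v_i v_k v_{k-1} … v_{i+1} v₀` is a cycle through all of `p`. Since `G` is connected
and `p` misses a vertex, some vertex of this cycle has a neighbour off it; opening the cycle there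
and appending that neighbour gives a longer path.
-/

open Finset

namespace SimpleGraph

variable {V : Type*} {G : SimpleGraph V}

lemma Preconnected.exists_adj_mem_notMem (hG : G.Preconnected) {s : Set V} {u v : V}
    (hu : u ∈ s) (hv : v ∉ s) : ∃ x ∈ s, ∃ y ∉ s, G.Adj x y := by
  obtain ⟨w⟩ := hG u v
  obtain ⟨d, -, hd, hd'⟩ := w.exists_boundary_dart s hu hv
  exact ⟨d.fst, hd, d.snd, hd', d.adj⟩

lemma ncard_neighborSet_le_card_filter [DecidableRel G.Adj] (v : V) (f : ℕ → V)
    (s : Finset ℕ) (h : G.neighborSet v ⊆ f '' s) :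
    (G.neighborSet v).ncard ≤ #{i ∈ s | G.Adj v (f i)} := by
  classical
  have hsub : G.neighborSet v ⊆ ({i ∈ s | G.Adj v (f i)}.image f : Finset V) := by
    intro w hw
    obtain ⟨i, hi, rfl⟩ := h hw
    exact mem_image_of_mem f (mem_filter.2 ⟨hi, hw⟩)
  exact (Set.ncard_le_ncard hsub).trans ((Set.ncard_coe_finset _).trans_le card_image_le)

namespace Walk

lemma length_eq_of_support_perm {a b c d : V} {p : G.Walk a b} {q : G.Walk c d}
    (h : q.support.Perm p.support) : q.length = p.length := by
  simpa only [length_support, Nat.add_right_cancel_iff] using h.length_eq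

lemma IsPath.of_support_perm {a b c d : V} {p : G.Walk a b} {q : G.Walk c d}
    (hp : p.IsPath) (h : q.support.Perm p.support) : q.IsPath :=
  IsPath.mk' (h.nodup_iff.2 hp.support_nodup)

lemma exists_notMem_support [Fintype V] {a b : V} (p : G.Walk a b)
    (h : p.length + 1 < Fintype.card V) : ∃ y, y ∉ p.support := by
  classical
  by_contra! hall
  have : Fintype.card V ≤ p.support.length :=
    (card_le_card fun x _ => List.mem_toFinset.2 (hall x)).trans
      (List.toFinset_card_le _)
  rw [length_support] at this
  omega

/-- Rerouting along `v_i ~ v_k` turns `v₀ … v_k` into `v₀ … v_i v_k v_{k-1} … v_{i+1}`. -/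
lemma exists_walk_getVert_succ_support_perm {a b : V} (p : G.Walk a b) {i : ℕ}
    (hi : i < p.length) (h : G.Adj (p.getVert i) b) :
    ∃ q : G.Walk a (p.getVert (i + 1)), q.support.Perm p.support := by
  refine ⟨(p.take i).append (cons h (p.drop (i + 1)).reverse), ?_⟩
  rw [support_append, support_cons, List.tail_cons, support_reverse, support_take,
    drop_support_eq_support_drop_min, min_eq_left (by omega)]
  exact (List.reverse_perm _).append_left _ |>.trans (by rw [List.take_append_drop])

lemma exists_walk_support_perm_of_adj {a z x : V} (p : G.Walk a z) (h : G.Adj z a)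
    (hx : x ∈ p.support) : ∃ u, ∃ q : G.Walk u x, q.support.Perm p.support := by
  classical
  have hx' : x ∈ (cons h p).support := List.mem_cons_of_mem _ hx
  have hc : ¬ ((cons h p).rotate x hx').Nil := by
    rw [← length_eq_zero_iff, length_rotate]; simp
  refine ⟨_, ((cons h p).rotate x hx').tail, ?_⟩
  rw [support_tail_of_not_nil _ hc]
  simpa using (support_rotate (cons h p) x hx').perm

lemma IsPath.exists_isPath_length_succ {a z y : V} {p : G.Walk a z} (hp : p.IsPath)
    (h : G.Adj z a) (hG : G.Preconnected) (hy : y ∉ p.support) :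
    ∃ u v, ∃ q : G.Walk u v, q.IsPath ∧ q.length = p.length + 1 := by
  obtain ⟨x, hx, y', hy', hxy⟩ :=
    hG.exists_adj_mem_notMem (s := {v | v ∈ p.support}) p.start_mem_support hy
  obtain ⟨u, q, hq⟩ := p.exists_walk_support_perm_of_adj h hx
  exact ⟨u, y', q.concat hxy, (hp.of_support_perm hq).concat (mt hq.mem_iff.1 hy') hxy,
    by rw [length_concat, length_eq_of_support_perm hq]⟩

lemma IsPath.neighborSet_subset_support {a b : V} {p : G.Walk a b} (hp : p.IsPath)
    (hmax : ∀ c d (q : G.Walk c d), q.IsPath → q.length ≤ p.length) :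
    G.neighborSet a ⊆ {x | x ∈ p.support} := by
  intro x hx
  by_contra hxp
  have := hmax _ _ _ ((cons_isPath_iff (G.adj_symm hx) p).2 ⟨hp, hxp⟩)
  simp at this

lemma exists_adj_getVert_succ_of_lt_ncard_add_ncard {a b : V} (p : G.Walk a b)
    (ha : G.neighborSet a ⊆ {x | x ∈ p.support})
    (hb : G.neighborSet b ⊆ {x | x ∈ p.support})
    (hdeg : p.length < (G.neighborSet a).ncard + (G.neighborSet b).ncard) :
    ∃ i < p.length, G.Adj a (p.getVert (i + 1)) ∧ G.Adj b (p.getVert i) := by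
  classical
  have hA : G.neighborSet a ⊆ (fun i => p.getVert (i + 1)) '' range p.length := by
    intro x hx
    obtain ⟨j, rfl, hj⟩ := mem_support_iff_exists_getVert.1 (ha hx)
    have : j ≠ 0 := fun h => G.ne_of_adj hx (by rw [h, getVert_zero])
    exact ⟨j - 1, mem_range.2 (by omega), congrArg p.getVert (by omega)⟩
  have hB : G.neighborSet b ⊆ p.getVert '' range p.length := by
    intro x hx
    obtain ⟨j, rfl, hj⟩ := mem_support_iff_exists_getVert.1 (hb hx)
    have : j ≠ p.length := fun h => G.ne_of_adj hx (by rw [h, getVert_length])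
    exact ⟨j, mem_range.2 (by omega), rfl⟩
  obtain ⟨i, hi⟩ := inter_nonempty_of_card_lt_card_add_card (filter_subset _ _)
    (filter_subset _ _) <| (card_range p.length).trans_lt <| hdeg.trans_le <|
      add_le_add (ncard_neighborSet_le_card_filter a _ _ hA)
        (ncard_neighborSet_le_card_filter b _ _ hB)
  simp only [mem_inter, mem_filter, mem_range] at hi
  exact ⟨i, hi.1.1, hi.1.2, hi.2.2⟩

end Walk

lemma exists_isPath_forall_length_le [Finite V] [Nonempty V] (G : SimpleGraph V) :
    ∃ a b, ∃ p : G.Walk a b,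
      p.IsPath ∧ ∀ c d (q : G.Walk c d), q.IsPath → q.length ≤ p.length := by
  have := Fintype.ofFinite V
  let S := {k | ∃ c d, ∃ q : G.Walk c d, q.IsPath ∧ q.length = k}
  have hbdd : BddAbove S :=
    ⟨Fintype.card V, by rintro _ ⟨c, d, q, hq, rfl⟩; exact hq.length_lt.le⟩
  obtain ⟨a, b, p, hp, hlen⟩ :=
    Nat.sSup_mem (s := S) ⟨0, Classical.arbitrary V, _, .nil, .nil, rfl⟩ hbdd
  exact ⟨a, b, p, hp, fun c d q hq => hlen ▸ le_csSup hbdd ⟨c, d, q, hq, rfl⟩⟩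

end SimpleGraph

theorem stmt3_general {V : Type*} [Fintype V] (G : SimpleGraph V) (n : ℕ)
    (hcard : 3 ≤ Fintype.card V) (hconn : G.Connected)
    (hdeg : ∀ v : V, n / 2 ≤ (G.neighborSet v).ncard) :
    ∃ (u v : V) (w : G.Walk u v), w.IsPath ∧ min (Fintype.card V) n ≤ w.length + 1 := by
  have : Nonempty V := Fintype.card_pos_iff.mp (by omega)
  obtain ⟨a, b, p, hp, hmax⟩ := G.exists_isPath_forall_length_le
  refine ⟨a, b, p, hp, ?_⟩
  by_contra! hshort
  have hV : p.length + 1 < Fintype.card V := hshort.trans_le (min_le_left _ _)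
  have hn : p.length + 1 < n := hshort.trans_le (min_le_right _ _)
  obtain ⟨i, hi, hai, hbi⟩ := p.exists_adj_getVert_succ_of_lt_ncard_add_ncard
    (hp.neighborSet_subset_support hmax)
    (by simpa using hp.reverse.neighborSet_subset_support fun c d q hq =>
      (hmax c d q hq).trans_eq p.length_reverse.symm)
    (by have := hdeg a; have := hdeg b; omega)
  obtain ⟨q, hq⟩ := p.exists_walk_getVert_succ_support_perm hi hbi.symm
  have hqp : q.length = p.length := SimpleGraph.Walk.length_eq_of_support_perm hq
  obtain ⟨y, hy⟩ := q.exists_notMem_support (by omega)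
  obtain ⟨u, v, r, hr, hlen⟩ :=
    (hp.of_support_perm hq).exists_isPath_length_succ hai.symm hconn.preconnected hy
  have := hmax u v r hr
  omega

/-- if G is connected on ≥ 3 vertices with δ(G) ≥ ⌊n/2⌋, then G
contains a path on at least min{|V(G)|, n} vertices. -/
theorem stmt3 {V : Type*} [Fintype V] (G : SimpleGraph V) (n : ℕ) (hn : 1 ≤ n)
    (hcard : 3 ≤ Fintype.card V) (hconn : G.Connected)
    (hdeg : ∀ v : V, n / 2 ≤ (G.neighborSet v).ncard) :
    ∃ (u v : V) (w : G.Walk u v), w.IsPath ∧ min (Fintype.card V) n ≤ w.length + 1 :=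
  stmt3_general G n hcard hconn hdeg
end

section
/- Let G be a disconnected finite simple graph such that m ≤ |V(G)| and every connected component of G has at most ⌊m/2⌋ vertices, where m ≥ 3. Then the complement of G contains a cycle with exactly m vertices. -/
/-- G contains a cycle on exactly k vertices. -/
def HasCycleOn {V : Type*} (G : SimpleGraph V) (k : ℕ) : Prop :=
  ∃ (u : V) (w : G.Walk u u), w.IsCycle ∧ w.length = k

/-!
Take `m` vertices and colour each by its connected component of `G`. Vertices of different
colours are adjacent in `Gᶜ`, so it suffices to arrange the `m` vertices in a cycle whose
neighbours have different colours, knowing that no colour occurs more than `⌊m/2⌋` times.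
List the vertices so that every colour occupies consecutive positions, a most frequent colour
first, and go around positions `0, ⌈m/2⌉, 1, ⌈m/2⌉ + 1, …`: cyclic neighbours are then about
`m/2` apart in the list, and a run of one colour that long would have to be the first block
and exceed `⌊m/2⌋`.
-/

open Finset Function SimpleGraph

section CyclicArrangement

variable {K : Type*} {m : ℕ}

def interleave (m : ℕ) (i : Fin m) : Fin m :=
  ⟨if (i : ℕ) % 2 = 0 then (i : ℕ) / 2 else (m + 1) / 2 + (i : ℕ) / 2,
    by have := i.isLt; split_ifs <;> omega⟩

lemma val_interleave (i : Fin m) :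
    (interleave m i : ℕ) = if (i : ℕ) % 2 = 0 then (i : ℕ) / 2 else (m + 1) / 2 + (i : ℕ) / 2 :=
  rfl

lemma interleave_injective : Injective (interleave m) := by
  intro a b h
  have := a.isLt
  have := b.isLt
  rw [Fin.ext_iff, val_interleave, val_interleave] at h
  ext
  split_ifs at h <;> omega

lemma Fin.val_add_one_eq_ite [NeZero m] (i : Fin m) :
    ((i + 1 : Fin m) : ℕ) = if (i : ℕ) + 1 = m then 0 else (i : ℕ) + 1 := by
  obtain ⟨n, rfl⟩ := Nat.exists_eq_succ_of_ne_zero (NeZero.ne m)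
  rw [Fin.val_add_one]
  simp only [Fin.ext_iff, Fin.val_last, Nat.succ_eq_add_one, Nat.add_right_cancel_iff]

lemma apply_interleave_ne_apply_interleave_add_one [NeZero m] (L : Fin m → K)
    (hL : ∀ p q : Fin m, L p = L q → 2 * (p : ℕ) ≤ q → (q : ℕ) < m / 2) (i : Fin m) :
    L (interleave m i) ≠ L (interleave m (i + 1)) := by
  intro h
  have h₁ := hL _ _ h
  have h₂ := hL _ _ h.symm
  have := i.isLt
  rw [val_interleave, val_interleave, Fin.val_add_one_eq_ite] at h₁ h₂
  split_ifs at h₁ h₂ <;> omega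

lemma val_lt_half_of_apply_eq [NeZero m] [DecidableEq K] (L : Fin m → K)
    (hrun : ∀ p j q, p ≤ j → j ≤ q → L p = L q → L j = L p)
    (hfirst : ∀ j, #{i | L i = L j} ≤ #{i | L i = L 0}) (hL : #{i | L i = L 0} ≤ m / 2)
    {p q : Fin m} (hpq : L p = L q) (h2pq : 2 * (p : ℕ) ≤ q) : (q : ℕ) < m / 2 := by
  -- the run from `p` to `q` is at least as long as `p`, so the first block reaches `p`
  have hrun_card : (q : ℕ) + 1 - p ≤ #{i | L i = L 0} := by
    rw [← Fin.card_Icc]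
    refine (card_le_card fun j hj => ?_).trans (hfirst p)
    obtain ⟨hpj, hjq⟩ := mem_Icc.mp hj
    simpa using hrun p j q hpj hjq hpq
  have hp : L p = L 0 := by
    by_contra hp
    have : #{i | L i = L 0} ≤ p := by
      rw [← Fin.card_Iio]
      refine card_le_card fun j hj => mem_Iio.mpr (lt_of_not_ge fun hpj => hp ?_)
      exact hrun 0 p j (Fin.zero_le p) hpj (mem_filter.mp hj).2.symm
    omega
  have : (q : ℕ) + 1 ≤ #{i | L i = L 0} := by
    rw [← Fin.card_Iic]
    refine card_le_card fun j hj => mem_filter.mpr ⟨mem_univ j, ?_⟩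
    exact hrun 0 j q (Fin.zero_le j) (mem_Iic.mp hj) (hp.symm.trans hpq)
  omega

lemma exists_perm_contiguous_fibers [NeZero m] (c : Fin m → K) [DecidableEq K] :
    ∃ t : Equiv.Perm (Fin m), (∀ p j q, p ≤ j → j ≤ q → c (t p) = c (t q) → c (t j) = c (t p)) ∧
      ∀ i, #{j | c j = c i} ≤ #{j | c j = c (t 0)} := by
  obtain ⟨i₀, -, hi₀⟩ := exists_max_image univ (fun i => #{j | c j = c i}) univ_nonempty
  -- a ranking of the colours, injective on the range of `c`, with the most frequent one first
  let g : K → ℕ := fun k => if k = c i₀ then 0 else ((invFun c k : Fin m) : ℕ) + 1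
  have hg : ∀ i j, g (c i) = g (c j) → c i = c j := by
    intro i j h
    simp only [g] at h
    split_ifs at h with hi hj hj
    · exact hi.trans hj.symm
    · have : invFun c (c i) = invFun c (c j) := Fin.ext (by omega)
      rw [← invFun_eq (f := c) ⟨i, rfl⟩, ← invFun_eq (f := c) ⟨j, rfl⟩, this]
  have hmono : Monotone ((g ∘ c) ∘ Tuple.sort (g ∘ c)) := Tuple.monotone_sort _
  set t := Tuple.sort (g ∘ c)
  refine ⟨t, fun p j q hpj hjq hpq => hg _ _ (le_antisymm ?_ (hmono hpj)), fun i => ?_⟩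
  · exact (hmono hjq).trans_eq (by simp [hpq])
  · have ht₀ : c (t 0) = c i₀ := by
      have : g (c (t 0)) ≤ g (c i₀) := by simpa using hmono (Fin.zero_le (t.symm i₀))
      by_contra h
      simp [g, h] at this
    exact ht₀ ▸ hi₀ i (mem_univ i)

theorem exists_perm_apply_ne_apply_add_one [NeZero m] [DecidableEq K] (c : Fin m → K)
    (hc : ∀ k, #{i | c i = k} ≤ m / 2) :
    ∃ σ : Equiv.Perm (Fin m), ∀ i, c (σ i) ≠ c (σ (i + 1)) := by
  obtain ⟨t, hrun, hfirst⟩ := exists_perm_contiguous_fibers c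
  have hfib : ∀ k, #{i | c (t i) = k} = #{i | c i = k} := fun k => card_equiv t (by simp)
  have hL : ∀ p q : Fin m, c (t p) = c (t q) → 2 * (p : ℕ) ≤ q → (q : ℕ) < m / 2 :=
    fun p q => val_lt_half_of_apply_eq (c ∘ t) hrun (fun j => by simpa [hfib] using hfirst (t j))
      (by simpa [hfib] using hc _)
  exact ⟨t * Equiv.ofBijective (interleave m) interleave_injective.bijective_of_finite,
    fun i => apply_interleave_ne_apply_interleave_add_one (c ∘ t) hL i⟩

end CyclicArrangement

lemma hasCycleOn_of_injective {V : Type*} {G : SimpleGraph V} {n : ℕ} (f : Fin (n + 3) → V)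
    (hf : Injective f) (hadj : ∀ i, G.Adj (f i) (f (i + 1))) : HasCycleOn G (n + 3) := by
  refine (cycleGraph_isContained_iff (by omega)).mp ⟨Hom.toCopy ⟨f, fun {u v} huv => ?_⟩ hf⟩
  rcases cycleGraph_adj.mp huv with h | h
  · rw [sub_eq_iff_eq_add'.mp h]
    exact (hadj v).symm
  · rw [sub_eq_iff_eq_add'.mp h]
    exact hadj u

lemma compl_adj_of_connectedComponentMk_ne {V : Type*} {G : SimpleGraph V} {u v : V}
    (h : G.connectedComponentMk u ≠ G.connectedComponentMk v) : Gᶜ.Adj u v :=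
  (compl_adj G u v).mpr
    ⟨fun huv => h (huv ▸ rfl), fun huv => h (ConnectedComponent.sound huv.reachable)⟩

theorem stmt6_general {V : Type*} [Fintype V] (G : SimpleGraph V) (m : ℕ) (hm : 3 ≤ m)
    (hcard : m ≤ Fintype.card V)
    (hcomp : ∀ c : G.ConnectedComponent, c.supp.ncard ≤ m / 2) :
    HasCycleOn Gᶜ m := by
  classical
  obtain ⟨n, rfl⟩ : ∃ n, m = n + 3 := ⟨m - 3, by omega⟩
  let e : Fin (n + 3) ↪ V := (Fin.castLEEmb hcard).trans (Fintype.equivFin V).symm.toEmbedding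
  have hc : ∀ k, #{i | G.connectedComponentMk (e i) = k} ≤ (n + 3) / 2 := by
    intro k
    rw [← Set.ncard_coe_finset]
    refine (Set.ncard_le_ncard_of_injOn e (fun i hi => ?_) e.injective.injOn).trans (hcomp k)
    simpa using hi
  obtain ⟨σ, hσ⟩ := exists_perm_apply_ne_apply_add_one (G.connectedComponentMk ∘ e) hc
  exact hasCycleOn_of_injective (e ∘ σ) (e.injective.comp σ.injective)
    fun i => compl_adj_of_connectedComponentMk_ne (hσ i)

/-- if G is disconnected, m ≤ |V(G)|, and every component of G has
at most ⌊m/2⌋ vertices, then the complement of G contains a cycle C_m. -/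
theorem stmt6 {V : Type*} [Fintype V] (G : SimpleGraph V) (m : ℕ) (hm : 3 ≤ m)
    (hdisc : ¬G.Connected) (hcard : m ≤ Fintype.card V)
    (hcomp : ∀ c : G.ConnectedComponent, c.supp.ncard ≤ m / 2) :
    HasCycleOn Gᶜ m :=
  stmt6_general G m hm hcard hcomp
end

section
/- Let G be a finite simple graph, X an independent set in G with |X| ≥ 3, and R = G - X. Suppose every connected component of R has at most one neighbor in X (i.e., every component is joined to at most one vertex of X), the complement of R contains a path on p ≥ 2 vertices, and 3 ≤ m ≤ min{|V(G)|, p + 2|X| - 3}. Then the complement of G contains a cycle on exactly m vertices. -/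
/-!
In `Gᶜ` the independent set `X` is a clique, and every vertex `w ∉ X` is adjacent to all of `X`
but at most one vertex, because the component of `w` in `R` is joined to at most one vertex of
`X`. If `m ≤ |X|` the cycle lies inside `X`. Otherwise take an initial segment of the path of
`Rᶜ`, which is also a path of `Gᶜ`, and close it up through all of `X`, threading `e` further
vertices `w₁, …, w_e` of `R` in between: `x₀ w₁ x₁ ⋯ w_e x_e` followed by the rest of `X`.
Each `xᵢ` only has to avoid the at most two vertices of `X` missed by its two neighbours outside
`X`, so the greedy choice succeeds as long as `e + 3 ≤ |X|`, which is what
`m ≤ p + 2|X| - 3` provides.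
-/

/-- G contains a path on exactly k vertices. -/
def HasPathOn {V : Type*} (G : SimpleGraph V) (k : ℕ) : Prop :=
  ∃ (u v : V) (w : G.Walk u v), w.IsPath ∧ w.length + 1 = k

namespace SimpleGraph

variable {V : Type*} {H : SimpleGraph V}

theorem hasCycleOn_of_isChain_getLast_cons {l : List V} (hne : l ≠ []) (hnd : l.Nodup)
    (hch : (l.getLast hne :: l).IsChain H.Adj) (h3 : 3 ≤ l.length) : HasCycleOn H l.length := by
  obtain ⟨b, l', rfl⟩ := List.exists_cons_of_ne_nil hne
  rw [List.isChain_cons_cons] at hch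
  set p := Walk.ofSupport (b :: l') hne hch.2 with hp_def
  have hlen : p.length = l'.length := by rw [hp_def, Walk.length_ofSupport]; rfl
  have hp : p.IsPath := Walk.IsPath.mk' (by rw [hp_def, Walk.support_ofSupport]; exact hnd)
  refine ⟨_, .cons hch.1 p, (Walk.cons_isCycle_iff p hch.1).2 ⟨hp, fun he => ?_⟩, ?_⟩
  · have := hp.length_eq_one_of_mem_edges (Sym2.eq_swap ▸ he)
    simp only [List.length_cons] at h3
    omega
  · exact congrArg Nat.succ hlen

theorem IsClique.isChain_of_nodup {S : Set V} (hS : H.IsClique S) {l : List V} (hnd : l.Nodup)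
    (hl : ∀ x ∈ l, x ∈ S) : l.IsChain H.Adj :=
  hnd.isChain.imp_of_mem_imp fun a b ha hb hab => hS (hl a ha) (hl b hb) hab

theorem IsClique.hasCycleOn {S : Finset V} (hS : H.IsClique (S : Set V)) {n : ℕ} (h3 : 3 ≤ n)
    (hn : n ≤ S.card) : HasCycleOn H n := by
  obtain ⟨T, hTS, rfl⟩ := Finset.exists_subset_card_eq hn
  have hmem : ∀ x ∈ T.toList, x ∈ (S : Set V) := fun x hx => hTS (Finset.mem_toList.1 hx)
  obtain ⟨b, l, hbl⟩ := List.exists_cons_of_ne_nil (l := T.toList)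
    (by rw [Ne, Finset.toList_eq_nil, ← Finset.card_eq_zero]; omega)
  have hlen : 2 ≤ l.length := by
    have := congrArg List.length hbl
    simp only [Finset.length_toList, List.length_cons] at this
    omega
  have hl : l ≠ [] := List.ne_nil_of_length_pos (by omega)
  have hnd : (b :: l).Nodup := hbl ▸ T.nodup_toList
  have hclose : H.Adj (l.getLast hl) b :=
    hS (hmem _ (by simp [hbl, List.getLast_mem])) (hmem _ (by simp [hbl]))
      fun h => (List.nodup_cons.1 hnd).1 (h ▸ List.getLast_mem hl)
  rw [← Finset.length_toList, hbl]
  refine hasCycleOn_of_isChain_getLast_cons (List.cons_ne_nil b l) hnd ?_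
    (by simp only [List.length_cons]; omega)
  rw [List.getLast_cons hl, List.isChain_cons_cons]
  exact ⟨hclose, hS.isChain_of_nodup hnd (hbl ▸ hmem)⟩

def AdjAllButOne (H : SimpleGraph V) (S : Set V) (w : V) : Prop :=
  {x ∈ S | ¬H.Adj w x}.Subsingleton

theorem AdjAllButOne.mono {S T : Set V} {w : V} (h : H.AdjAllButOne S w) (hTS : T ⊆ S) :
    H.AdjAllButOne T w :=
  h.anti fun _ hx => ⟨hTS hx.1, hx.2⟩

theorem exists_mem_forall_adj_of_card_lt {Y F : Finset V} (hF : ∀ w ∈ F, H.AdjAllButOne Y w)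
    (hcard : F.card < Y.card) : ∃ x ∈ Y, ∀ w ∈ F, H.Adj w x := by
  classical
  let B := F.biUnion fun w => Y.filter (¬H.Adj w ·)
  have hB : B.card ≤ F.card := by
    simpa using Finset.card_biUnion_le_card_mul F _ 1 fun w hw =>
      Finset.card_le_one.2 fun x hx y hy => hF w hw (by simpa using hx) (by simpa using hy)
  obtain ⟨x, hx⟩ : (Y \ B).Nonempty := by
    rw [← Finset.card_pos]
    have := Finset.le_card_sdiff B Y
    omega
  obtain ⟨hxY, hxB⟩ := Finset.mem_sdiff.1 hx
  exact ⟨x, hxY, fun w hw => by_contra fun h =>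
    hxB (Finset.mem_biUnion.2 ⟨w, hw, by simp [hxY, h]⟩)⟩

theorem IsClique.exists_isChain_through {Y : Finset V} (hY : H.IsClique (Y : Set V))
    {ws : List V} {u v : V} (hu : H.AdjAllButOne Y u) (hv : H.AdjAllButOne Y v)
    (hws : ∀ w ∈ ws, w ∉ Y ∧ H.AdjAllButOne Y w) (hnd : ws.Nodup)
    (hcard : ws.length + 3 ≤ Y.card) :
    ∃ T : List V, (u :: T ++ [v]).IsChain H.Adj ∧ T.Nodup ∧ T.length = Y.card + ws.length ∧
      ∀ z ∈ T, z ∈ Y ∨ z ∈ ws := by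
  classical
  induction ws generalizing Y u with
  | nil =>
    obtain ⟨a, ha, hua⟩ := exists_mem_forall_adj_of_card_lt (F := {u}) (by simpa using hu)
      (by simp only [List.length_nil, zero_add, Finset.card_singleton] at hcard ⊢; omega)
    obtain ⟨b, hb, hvb⟩ := exists_mem_forall_adj_of_card_lt (F := {v}) (Y := Y.erase a)
      (by simpa using hv.mono (by simp))
      (by simp only [List.length_nil, zero_add, Finset.card_singleton, Finset.card_erase_of_mem ha]
            at hcard ⊢
          omega)
    have hab : b ≠ a := Finset.ne_of_mem_erase hb
    have hbY : b ∈ Y := Finset.mem_of_mem_erase hb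
    set rest := ((Y.erase a).erase b).toList
    have hTnd : (a :: rest ++ [b]).Nodup := by
      simp +contextual [rest, List.nodup_append, hab.symm, Finset.nodup_toList]
    have hTY : ∀ z ∈ a :: rest ++ [b], z ∈ Y := by
      simp +contextual [rest, or_imp, ha, hbY]
    refine ⟨a :: rest ++ [b], ?_, hTnd, ?_, fun z hz => .inl (hTY z hz)⟩
    · show ((u :: a :: rest) ++ [b] ++ [v]).IsChain H.Adj
      refine .append (List.isChain_cons_cons.2 ⟨hua u (by simp), hY.isChain_of_nodup hTnd hTY⟩)
        (.singleton v) fun x hx y hy => ?_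
      rw [List.getLast?_concat, Option.mem_some_iff] at hx
      rw [List.head?_cons, Option.mem_some_iff] at hy
      exact hx ▸ hy ▸ (hvb v (by simp)).symm
    · simp only [rest, List.cons_append, List.length_cons, List.length_append,
        Finset.length_toList, Finset.card_erase_of_mem hb, Finset.card_erase_of_mem ha,
        List.length_nil, zero_add, add_zero]
      omega
  | cons w ws ih =>
    obtain ⟨hwY, hw⟩ := hws w (by simp)
    obtain ⟨x, hx, hux⟩ := exists_mem_forall_adj_of_card_lt (F := {u, w}) (Y := Y)
      (by simpa using ⟨hu, hw⟩) (by
        simp only [List.length_cons] at hcard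
        have := Finset.card_le_two (a := u) (b := w)
        omega)
    have hsub : ((Y.erase x : Finset V) : Set V) ⊆ Y := by simp
    obtain ⟨T, hTch, hTnd, hTlen, hTmem⟩ := ih (Y := Y.erase x) (u := w) (hY.subset hsub)
      (hw.mono hsub) (hv.mono hsub)
      (fun z hz => ⟨fun h => (hws z (by simp [hz])).1 (Finset.mem_of_mem_erase h),
        (hws z (by simp [hz])).2.mono hsub⟩)
      (List.nodup_cons.1 hnd).2 (by
        simp only [List.length_cons, Finset.card_erase_of_mem hx] at hcard ⊢
        omega)
    refine ⟨x :: w :: T, ?_, ?_, ?_, ?_⟩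
    · simp only [List.cons_append, List.isChain_cons_cons] at hTch ⊢
      exact ⟨hux u (by simp), (hux w (by simp)).symm, hTch⟩
    · have hxT : x ∉ T := fun h => (hTmem x h).elim (by simp)
        fun h' => (hws x (by simp [h'])).1 hx
      have hwT : w ∉ T := fun h => (hTmem w h).elim (fun h' => hwY (Finset.mem_of_mem_erase h'))
        (List.nodup_cons.1 hnd).1
      simp only [List.nodup_cons, List.mem_cons, not_or]
      exact ⟨⟨fun h => hwY (h ▸ hx), hxT⟩, hwT, hTnd⟩
    · simp only [List.length_cons, hTlen, Finset.card_erase_of_mem hx]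
      omega
    · simp only [List.mem_cons]
      rintro z (rfl | rfl | hz)
      · exact .inl hx
      · exact .inr (.inl rfl)
      · exact (hTmem z hz).imp Finset.mem_of_mem_erase .inr

theorem IsClique.hasCycleOn_of_path {Y : Finset V} (hY : H.IsClique (Y : Set V))
    (hadj : ∀ w ∉ Y, H.AdjAllButOne Y w) {P ws : List V} (hP : P ≠ []) (hPnd : P.Nodup)
    (hPch : P.IsChain H.Adj) (hPY : ∀ z ∈ P, z ∉ Y) (hws : ∀ w ∈ ws, w ∉ Y ∧ w ∉ P)
    (hwsnd : ws.Nodup) (hcard : ws.length + 3 ≤ Y.card) :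
    HasCycleOn H (P.length + Y.card + ws.length) := by
  obtain ⟨v, P', rfl⟩ := List.exists_cons_of_ne_nil hP
  set u := (v :: P').getLast hP
  have huY : u ∉ Y := hPY u (List.getLast_mem hP)
  obtain ⟨T, hTch, hTnd, hTlen, hTmem⟩ := hY.exists_isChain_through (hadj u huY)
    (hadj v (hPY v (by simp))) (fun w hw => ⟨(hws w hw).1, hadj w (hws w hw).1⟩) hwsnd hcard
  have hC : T ++ v :: P' ≠ [] := by simp
  have hCnd : (T ++ v :: P').Nodup := List.nodup_append.2 ⟨hTnd, hPnd, fun z hzT y hyP hzy =>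
    (hTmem z hzT).elim (fun h => hPY y hyP (hzy ▸ h)) fun h => (hws z h).2 (hzy ▸ hyP)⟩
  have hCch : ((T ++ v :: P').getLast hC :: (T ++ v :: P')).IsChain H.Adj := by
    rw [List.getLast_append_of_ne_nil hC hP]
    simpa using hTch.append_overlap (l₃ := P') (by simpa using hPch) (List.cons_ne_nil v [])
  have := hasCycleOn_of_isChain_getLast_cons hC hCnd hCch (by
    simp only [List.length_append, hTlen, List.length_cons]
    omega)
  rwa [List.length_append, hTlen, Nat.add_comm, ← Nat.add_assoc] at this

theorem IsClique.hasCycleOn_of_path_of_le [Fintype V] {Y : Finset V}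
    (hY : H.IsClique (Y : Set V)) (hadj : ∀ w ∉ Y, H.AdjAllButOne Y w) {L : List V} (hL : L ≠ [])
    (hLnd : L.Nodup) (hLch : L.IsChain H.Adj) (hLY : ∀ z ∈ L, z ∉ Y) {m : ℕ} (h3 : 3 ≤ Y.card)
    (hYm : Y.card < m) (hmV : m ≤ Fintype.card V) (hmL : m + 3 ≤ L.length + 2 * Y.card) :
    HasCycleOn H m := by
  classical
  have hLlen : 1 ≤ L.length := List.length_pos_iff.2 hL
  -- The cycle uses `s` vertices of the path, all of `Y`, and `m - |Y| - s` further vertices.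
  set s := min L.length (m - Y.card) with hs
  set P := L.take s
  have hPlen : P.length = s := by
    rw [List.length_take]
    omega
  have hPnd : P.Nodup := (L.take_sublist _).nodup hLnd
  have hPY : ∀ z ∈ P, z ∉ Y := fun z hz => hLY z (List.mem_of_mem_take hz)
  obtain ⟨W, hW, hWcard⟩ := Finset.exists_subset_card_eq (s := (Y ∪ P.toFinset)ᶜ)
    (n := m - Y.card - s) (by
      rw [Finset.card_compl, Finset.card_union_of_disjoint
        (Finset.disjoint_left.2 fun z hzY hzP => hPY z (List.mem_toFinset.1 hzP) hzY),
        List.toFinset_card_of_nodup hPnd]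
      omega)
  have hWlen : W.toList.length = m - Y.card - s := by rw [Finset.length_toList, hWcard]
  have := hY.hasCycleOn_of_path hadj (List.ne_nil_of_length_pos (by omega)) hPnd (hLch.take _)
    hPY (fun w hw => by simpa using hW (Finset.mem_toList.1 hw)) W.nodup_toList (by omega)
  rwa [hPlen, hWlen, show s + Y.card + (m - Y.card - s) = m by omega] at this

variable {G : SimpleGraph V}

theorem compl_adjAllButOne_of_subsingleton_join {X : Set V}
    (hjoin : ∀ c : (G.induce Xᶜ).ConnectedComponent,
      {x ∈ X | ∃ v ∈ c.supp, G.Adj x ↑v}.Subsingleton)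
    {w : V} (hw : w ∉ X) : Gᶜ.AdjAllButOne X w :=
  (hjoin (G.induce Xᶜ |>.connectedComponentMk ⟨w, hw⟩)).anti fun _ ⟨hx, hnadj⟩ =>
    ⟨hx, ⟨w, hw⟩, rfl, by_contra fun h =>
      hnadj ⟨fun hwx => hw (hwx ▸ hx), fun h' => h h'.symm⟩⟩

theorem _root_.HasPathOn.exists_list_of_compl_induce {S : Set V} {p : ℕ}
    (h : HasPathOn (G.induce S)ᶜ p) :
    ∃ L : List V, L ≠ [] ∧ L.length = p ∧ L.Nodup ∧ L.IsChain Gᶜ.Adj ∧ ∀ z ∈ L, z ∈ S := by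
  obtain ⟨_, _, w, hw, hlen⟩ := h
  refine ⟨w.support.map (↑), List.map_eq_nil_iff.not.2 w.support_ne_nil, by simp [hlen],
    hw.support_nodup.map Subtype.val_injective,
    List.isChain_map_of_isChain _ (fun a b hab => ?_) w.isChain_adj_support, ?_⟩
  · exact ⟨Subtype.val_injective.ne hab.1, hab.2⟩
  · intro z hz
    obtain ⟨y, -, rfl⟩ := List.mem_map.1 hz
    exact y.2

end SimpleGraph

theorem stmt12_general {V : Type*} [Fintype V] (G : SimpleGraph V) (X : Set V) (p m : ℕ)
    (hind : ∀ x ∈ X, ∀ y ∈ X, ¬G.Adj x y)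
    (hX : 3 ≤ X.ncard)
    (hjoin : ∀ c : (G.induce (Xᶜ : Set V)).ConnectedComponent,
      {x ∈ X | ∃ v ∈ c.supp, G.Adj x ↑v}.Subsingleton)
    (hpath : HasPathOn ((G.induce (Xᶜ : Set V))ᶜ) p)
    (hm3 : 3 ≤ m)
    (hm : (m : ℤ) ≤ min ((Fintype.card V : ℤ)) ((p : ℤ) + 2 * (X.ncard : ℤ) - 3)) :
    HasCycleOn Gᶜ m := by
  classical
  obtain ⟨hmV, hmX⟩ : m ≤ Fintype.card V ∧ m + 3 ≤ p + 2 * X.ncard := by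
    rw [le_min_iff] at hm
    omega
  set Y := (Set.toFinite X).toFinset
  have hYX : (Y : Set V) = X := Set.Finite.coe_toFinset _
  have hYcard : Y.card = X.ncard := (Set.ncard_eq_toFinset_card X _).symm
  have hY : Gᶜ.IsClique (Y : Set V) := hYX ▸ fun x hx y hy hxy => ⟨hxy, hind x hx y hy⟩
  by_cases hmY : m ≤ Y.card
  · exact hY.hasCycleOn hm3 hmY
  have hadj : ∀ w ∉ Y, Gᶜ.AdjAllButOne Y w := fun w hw =>
    hYX ▸ SimpleGraph.compl_adjAllButOne_of_subsingleton_join hjoin (hYX ▸ hw)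
  obtain ⟨L, hLne, hLlen, hLnd, hLch, hLX⟩ := hpath.exists_list_of_compl_induce
  exact hY.hasCycleOn_of_path_of_le hadj hLne hLnd hLch (fun z hz => by simpa [Y] using hLX z hz)
    (by omega) (by omega) hmV (by omega)

/-- X an independent set with |X| ≥ 3, R = G - X, every component
of R joined to at most one vertex of X, complement of R has a path on p ≥ 2
vertices, and 3 ≤ m ≤ min{|V(G)|, p + 2|X| - 3}. Then Gᶜ contains a C_m. -/
theorem stmt12 {V : Type*} [Fintype V] (G : SimpleGraph V) (X : Set V) (p m : ℕ)
    (hind : ∀ x ∈ X, ∀ y ∈ X, ¬G.Adj x y)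
    (hX : 3 ≤ X.ncard)
    (hjoin : ∀ c : (G.induce (Xᶜ : Set V)).ConnectedComponent,
      {x ∈ X | ∃ v ∈ c.supp, G.Adj x ↑v}.Subsingleton)
    (hp : 2 ≤ p) (hpath : HasPathOn ((G.induce (Xᶜ : Set V))ᶜ) p)
    (hm3 : 3 ≤ m)
    (hm : (m : ℤ) ≤ min ((Fintype.card V : ℤ)) ((p : ℤ) + 2 * (X.ncard : ℤ) - 3)) :
    HasCycleOn Gᶜ m :=
  stmt12_general G X p m hind hX hjoin hpath hm3 hm
end

section
/- For n ≥ 2 and m ≥ 2n+1, let α = (m-1)/(n-1), β = ⌈α⌉, γ = β²/(β+1), and t = (n-1)·β + 1 if α ≤ γ, else t = ⌊(m-1)/β⌋ + m. Then there exists a graph G on t - 1 vertices such that G contains no path on n vertices and the complement of G contains no wheel W_m; consequently R(P_n, W_m) ≥ t. -/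
/-- G contains a wheel W_m: a hub vertex adjacent to all vertices of a cycle C_m. -/
def HasWheel {V : Type*} (G : SimpleGraph V) (m : ℕ) : Prop :=
  ∃ (v u : V) (w : G.Walk u u), w.IsCycle ∧ w.length = m ∧
    ∀ x ∈ w.support, G.Adj v x

/-- The value t(n,m) from the paper. -/
def tval (n m : ℕ) : ℤ :=
  let α : ℚ := ((m : ℚ) - 1) / ((n : ℚ) - 1)
  let β : ℤ := ⌈α⌉
  if α ≤ (β : ℚ) ^ 2 / ((β : ℚ) + 1) then ((n : ℤ) - 1) * β + 1
  else ((m : ℤ) - 1) / β + (m : ℤ)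

/-!
Split the `t - 1` vertices into `k` residue classes modulo `k` and make each class a clique. A
path stays inside one clique, so cliques of order at most `n - 1` exclude `P_n`. In the complement
the hub of a wheel is non-adjacent to its own clique, so the `m` rim vertices lie outside it, and
cliques of order at least `t - m` exclude `W_m`. Residue classes have order `⌊(t-1)/k⌋` or
`⌈(t-1)/k⌉`; with `β = ⌈(m-1)/(n-1)⌉`, taking `k = β` in the first case of `t` and `k = β + 1` in
the second puts both orders in `[t - m, n - 1]`. Finally, a graph on `t - 1` vertices with neither
property restricts to one on any `r ≤ t - 1` vertices.
-/

open Finset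

namespace SimpleGraph

variable {V ι : Type*}

def clusterGraph (f : V → ι) : SimpleGraph V := fromRel fun x y ↦ f x = f y

variable {f : V → ι}

@[simp] lemma clusterGraph_adj {x y : V} : (clusterGraph f).Adj x y ↔ x ≠ y ∧ f x = f y := by
  simp [clusterGraph, eq_comm (a := f y)]

@[simp] lemma compl_clusterGraph_adj {x y : V} : (clusterGraph f)ᶜ.Adj x y ↔ f x ≠ f y := by
  rw [compl_adj, clusterGraph_adj]
  grind

lemma Walk.apply_eq_of_mem_support_clusterGraph {u v x : V} (w : (clusterGraph f).Walk u v)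
    (hx : x ∈ w.support) : f x = f u := by
  induction w with
  | nil => simp_all
  | cons h _ ih =>
    rcases List.mem_cons.1 (Walk.support_cons _ _ ▸ hx) with rfl | hx
    · rfl
    · exact (ih hx).trans (clusterGraph_adj.1 h).2.symm

variable [Fintype V] [DecidableEq ι]

lemma not_hasPathOn_clusterGraph {n : ℕ} (h : ∀ v, #{x | f x = f v} < n) :
    ¬HasPathOn (clusterGraph f) n := by
  classical
  rintro ⟨u, v, w, hw, rfl⟩
  have hsub : w.support.toFinset ⊆ ({x | f x = f u} : Finset V) := fun x hx ↦ by
    simpa using w.apply_eq_of_mem_support_clusterGraph (List.mem_toFinset.1 hx)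
  have := card_le_card hsub
  rw [List.toFinset_card_of_nodup hw.support_nodup, Walk.length_support] at this
  exact (h u).not_ge this

lemma not_hasWheel_compl_clusterGraph {m : ℕ} (h : ∀ v, Fintype.card V < #{x | f x = f v} + m) :
    ¬HasWheel (clusterGraph f)ᶜ m := by
  classical
  rintro ⟨v, u, w, hw, rfl, hhub⟩
  have hdisj : Disjoint w.support.tail.toFinset ({x | f x = f v} : Finset V) := by
    refine Finset.disjoint_left.2 fun x hx hxv ↦ ?_
    have := hhub x (List.mem_of_mem_tail (List.mem_toFinset.1 hx))
    simp_all
  have := card_union_of_disjoint hdisj ▸ card_le_univ _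
  rw [List.toFinset_card_of_nodup hw.support_nodup, List.length_tail, Walk.length_support] at this
  exact (h v).not_ge (by omega)

end SimpleGraph

open SimpleGraph

lemma Fin.card_filter_val_mod_eq (N k v : ℕ) :
    #{x : Fin N | (x : ℕ) % k = v % k} = N.count (· ≡ v [MOD k]) := by
  rw [Nat.count_eq_card_filter_range, ← Nat.Iio_eq_range, ← Fin.map_valEmbedding_univ, filter_map,
    card_map]
  rfl

lemma Nat.count_modEq_le_add_sub_one_div {N k : ℕ} (hk : 0 < k) (v : ℕ) :
    N.count (· ≡ v [MOD k]) ≤ (N + k - 1) / k := by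
  rw [Nat.count_modEq_card _ hk, Nat.le_div_iff_mul_le hk]
  have := Nat.div_add_mod N k
  split_ifs <;> rw [add_mul, mul_comm] <;> omega

theorem exists_not_hasPathOn_not_hasWheel_compl {N k n m : ℕ} (hk : 0 < k)
    (hn : N ≤ k * (n - 1)) (hm : N < N / k + m) :
    ∃ G : SimpleGraph (Fin N), ¬HasPathOn G n ∧ ¬HasWheel Gᶜ m := by
  refine ⟨clusterGraph fun x : Fin N ↦ (x : ℕ) % k, not_hasPathOn_clusterGraph fun v ↦ ?_,
    not_hasWheel_compl_clusterGraph fun v ↦ ?_⟩ <;> rw [Fin.card_filter_val_mod_eq]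
  · refine (Nat.count_modEq_le_add_sub_one_div hk _).trans_lt ((Nat.div_lt_iff_lt_mul hk).2 ?_)
    have : 0 < n - 1 := Nat.pos_of_mul_pos_left (v.pos.trans_le hn)
    rw [show n = n - 1 + 1 by omega, add_mul, mul_comm]
    omega
  · rw [Nat.count_modEq_card _ hk, Fintype.card_fin]
    omega

lemma HasPathOn.map {V W : Type*} {G : SimpleGraph V} {H : SimpleGraph W} (e : G ↪g H) {n : ℕ} :
    HasPathOn G n → HasPathOn H n := by
  rintro ⟨u, v, w, hw, hn⟩
  exact ⟨e u, e v, w.map e.toHom, hw.map e.injective, by rwa [Walk.length_map]⟩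

lemma HasWheel.map {V W : Type*} {G : SimpleGraph V} {H : SimpleGraph W} (e : G ↪g H) {m : ℕ} :
    HasWheel G m → HasWheel H m := by
  rintro ⟨v, u, w, hw, hm, hhub⟩
  refine ⟨e v, e u, w.map e.toHom, (Walk.isCycle_map_iff_of_injective e.injective).2 hw,
    by rwa [Walk.length_map], ?_⟩
  simp only [Walk.support_map, List.mem_map, forall_exists_index, and_imp,
    forall_apply_eq_imp_iff₂]
  exact fun x hx ↦ e.map_adj_iff.2 (hhub x hx)

lemma lt_of_forall_hasPathOn_or_hasWheel_compl {N r n m : ℕ} {G : SimpleGraph (Fin N)}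
    (hP : ¬HasPathOn G n) (hW : ¬HasWheel Gᶜ m)
    (hr : ∀ H : SimpleGraph (Fin r), HasPathOn H n ∨ HasWheel Hᶜ m) : N < r := by
  by_contra! h
  let e := Embedding.comap (Fin.castLEEmb h) G
  rcases hr (G.comap (Fin.castLEEmb h)) with hp | hw
  · exact hP (hp.map e)
  · exact hW (hw.map (Embedding.complEquiv e))

lemma tval_cases {n m : ℕ} (hn : 2 ≤ n) (hm : 2 ≤ m) :
    ∃ b : ℕ, 0 < b ∧ m - 1 ≤ b * (n - 1) ∧ (b - 1) * (n - 1) < m - 1 ∧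
      (tval n m = ((n - 1) * b + 1 : ℕ) ∨ tval n m = ((m - 1) / b + m : ℕ)) := by
  have hn₁ : (0 : ℚ) < (n - 1 : ℕ) := by norm_cast; omega
  have hm₁ : (0 : ℚ) < (m - 1 : ℕ) := by norm_cast; omega
  set α : ℚ := ((m : ℚ) - 1) / ((n : ℚ) - 1) with hα
  have hα' : α = (m - 1 : ℕ) / (n - 1 : ℕ) := by
    rw [Nat.cast_pred (by omega), Nat.cast_pred (by omega)]
  have hα₀ : 0 < α := hα' ▸ div_pos hm₁ hn₁
  have hmα : ((m - 1 : ℕ) : ℚ) = α * (n - 1 : ℕ) := by rw [hα', div_mul_cancel₀ _ hn₁.ne']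
  refine ⟨⌈α⌉₊, Nat.ceil_pos.2 hα₀, ?_, ?_, ?_⟩
  · have := hmα ▸ mul_le_mul_of_nonneg_right (Nat.le_ceil α) hn₁.le
    exact_mod_cast this
  · have := hmα ▸ mul_lt_mul_of_pos_right
      (Nat.lt_ceil.1 (Nat.sub_one_lt (Nat.ceil_pos.2 hα₀).ne')) hn₁
    exact_mod_cast this
  · dsimp only [tval]
    rw [← hα, ← Int.natCast_ceil_eq_ceil hα₀.le]
    split_ifs
    · left; push_cast [Nat.cast_pred (by omega : 0 < n)]; ring
    · right; push_cast [Nat.cast_pred (by omega : 0 < m)]; rfl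

lemma exists_clique_count {n m t : ℕ} (hn : 2 ≤ n) (hm : 2 ≤ m) (ht : (t : ℤ) = tval n m) :
    ∃ k, 0 < k ∧ t - 1 ≤ k * (n - 1) ∧ t - 1 < (t - 1) / k + m := by
  obtain ⟨b, hb, hb₁, hb₂, htb⟩ := tval_cases hn hm
  rw [← ht, Nat.cast_inj, Nat.cast_inj] at htb
  obtain ⟨p, rfl⟩ : ∃ p, n = p + 1 := ⟨n - 1, by omega⟩
  obtain ⟨q, rfl⟩ : ∃ q, m = q + 1 := ⟨m - 1, by omega⟩
  simp only [Nat.add_sub_cancel] at hb₁ hb₂ htb ⊢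
  rcases htb with rfl | rfl
  · refine ⟨b, hb, by rw [Nat.add_sub_cancel, mul_comm], ?_⟩
    rw [Nat.add_sub_cancel, Nat.mul_div_cancel _ hb]
    obtain ⟨c, rfl⟩ : ∃ c, b = c + 1 := ⟨b - 1, by omega⟩
    rw [Nat.add_sub_cancel] at hb₂
    linarith
  · have hQp : q / b ≤ p := Nat.div_le_of_le_mul hb₁
    have hQq : q / b * b ≤ q := Nat.div_mul_le_self _ _
    generalize q / b = Q at *
    rw [show Q + (q + 1) - 1 = Q + q by omega]
    refine ⟨b + 1, by omega, by nlinarith, ?_⟩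
    have : Q ≤ (Q + q) / (b + 1) := (Nat.le_div_iff_mul_le (by omega)).2 (by linarith)
    omega

/-- for n ≥ 2 and m ≥ 2n+1 there is a graph on t(n,m) - 1 vertices
with no P_n whose complement has no W_m; consequently R(P_n, W_m) ≥ t(n,m). -/
theorem stmt14 (n m t : ℕ) (hn : 2 ≤ n) (hm : 2 * n + 1 ≤ m)
    (ht : (t : ℤ) = tval n m) :
    (∃ G : SimpleGraph (Fin (t - 1)), ¬HasPathOn G n ∧ ¬HasWheel (Gᶜ) m) ∧
    ∀ T : ℕ, IsLeast {r : ℕ | ∀ G : SimpleGraph (Fin r),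
        HasPathOn G n ∨ HasWheel (Gᶜ) m} T → t ≤ T := by
  obtain ⟨k, hk, hkn, hkm⟩ := exists_clique_count hn (by omega) ht
  obtain ⟨G, hP, hW⟩ := exists_not_hasPathOn_not_hasWheel_compl hk hkn hkm
  refine ⟨⟨G, hP, hW⟩, fun T hT ↦ ?_⟩
  have := lt_of_forall_hasPathOn_or_hasWheel_compl hP hW hT.1
  omega
end
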